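/- arXiv:1704.05418 — 2 statements merged into one kernel-verified Lean document; each statement's English description precedes it below -/
import Mathlib

section
/- For all real numbers a, b and parameter 0 < μ < 2, with A = (4 - 2μ)/(4 - μ), one has A·(a + b/2)² ≤ a² + (1/μ - 1/2)·b². -/
/-- Key algebraic inequality: for `0 < μ < 2` and `A = (4 - 2μ)/(4 - μ)`,
`A·(a + b/2)² ≤ a² + (1/μ - 1/2)·b²` for all reals `a, b`. -/
theorem stmt_0 (a b μ : ℝ) (hμ0 : 0 < μ) (hμ2 : μ < 2) :
    ((4 - 2 * μ) / (4 - μ)) * (a + b / 2) ^ 2 ≤ a ^ 2 + (1 / μ - 1 / 2) * b ^ 2 := by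
  have h4 : (0:ℝ) < 4 - μ := by linarith
  rw [div_mul_eq_mul_div, div_le_iff₀ h4]
  have e : μ * ((a ^ 2 + (1 / μ - 1 / 2) * b ^ 2) * (4 - μ) - (4 - 2 * μ) * (a + b / 2) ^ 2)
      = (μ * a - (2 - μ) * b) ^ 2 := by
    field_simp
    ring
  nlinarith [sq_nonneg (μ * a - (2 - μ) * b), e, hμ0]
end

section
/- If w : [0,l] → ℝ is positive and C² and satisfies ((log w)')² + c ≤ -(log w)'' pointwise for a constant c, then for every C¹ function ψ vanishing at 0 and l, c·∫₀ˡ ψ² ds ≤ ∫₀ˡ (ψ')² ds. -/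
open MeasureTheory intervalIntegral

/-- If `w > 0` is C² on `[0,l]` and `((log w)')² + c ≤ -(log w)''` pointwise,
then `c ∫₀ˡ ψ² ≤ ∫₀ˡ (ψ')²` for every C¹ function `ψ` vanishing at the endpoints. -/
theorem stmt_4 (l c : ℝ) (hl : 0 < l) (w : ℝ → ℝ)
    (hw : ContDiffOn ℝ 2 w (Set.Icc 0 l)) (hwp : ∀ s ∈ Set.Icc 0 l, 0 < w s)
    (hineq : ∀ s ∈ Set.Icc 0 l,
      (deriv (fun t => Real.log (w t)) s) ^ 2 + c
        ≤ -(deriv (deriv (fun t => Real.log (w t))) s)) :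
    ∀ ψ : ℝ → ℝ, ContDiffOn ℝ 1 ψ (Set.Icc 0 l) → ψ 0 = 0 → ψ l = 0 →
      c * (∫ s in (0:ℝ)..l, (ψ s) ^ 2) ≤ ∫ s in (0:ℝ)..l, (deriv ψ s) ^ 2 := by
  intro ψ hψ hψ0 hψl
  have hI : UniqueDiffOn ℝ (Set.Icc (0:ℝ) l) := uniqueDiffOn_Icc hl
  set g : ℝ → ℝ := fun t => Real.log (w t) with hgdef
  have hgC : ContDiffOn ℝ 2 g (Set.Icc 0 l) := hw.log (fun s hs => (hwp s hs).ne')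
  set V : ℝ → ℝ := derivWithin g (Set.Icc 0 l) with hVdef
  set V' : ℝ → ℝ := derivWithin V (Set.Icc 0 l) with hV'def
  set Ψ : ℝ → ℝ := derivWithin ψ (Set.Icc 0 l) with hΨdef
  have hVC : ContDiffOn ℝ 1 V (Set.Icc 0 l) := hgC.derivWithin hI (by norm_num)
  have hV'c : ContinuousOn V' (Set.Icc 0 l) := by
    have h : ContDiffOn ℝ 0 V' (Set.Icc 0 l) := hVC.derivWithin hI (by norm_num)
    exact h.continuousOn
  have hΨc : ContinuousOn Ψ (Set.Icc 0 l) := by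
    have h : ContDiffOn ℝ 0 Ψ (Set.Icc 0 l) := hψ.derivWithin hI (by norm_num)
    exact h.continuousOn
  have hIoo : ∀ s ∈ Set.Ioo (0:ℝ) l, Set.Icc (0:ℝ) l ∈ nhds s := fun s hs =>
    Icc_mem_nhds hs.1 hs.2
  have hVd : ∀ s ∈ Set.Ioo (0:ℝ) l, HasDerivAt V (V' s) s := by
    intro s hs
    exact ((hVC.differentiableOn one_ne_zero s
      (Set.Ioo_subset_Icc_self hs)).hasDerivWithinAt).hasDerivAt (hIoo s hs)
  have hψd : ∀ s ∈ Set.Ioo (0:ℝ) l, HasDerivAt ψ (Ψ s) s := by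
    intro s hs
    exact ((hψ.differentiableOn one_ne_zero s
      (Set.Ioo_subset_Icc_self hs)).hasDerivWithinAt).hasDerivAt (hIoo s hs)
  have hgd : ∀ s ∈ Set.Ioo (0:ℝ) l, HasDerivAt g (V s) s := by
    intro s hs
    exact ((hgC.differentiableOn (by norm_num) s
      (Set.Ioo_subset_Icc_self hs)).hasDerivWithinAt).hasDerivAt (hIoo s hs)
  have hkey : ∀ s ∈ Set.Ioo (0:ℝ) l, V s ^ 2 + c ≤ -V' s := by
    intro s hs
    have h1 := hineq s (Set.Ioo_subset_Icc_self hs)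
    have h2 : deriv g s = V s := (hgd s hs).deriv
    have h3 : deriv (deriv g) s = V' s := by
      have hev : deriv g =ᶠ[nhds s] V := by
        filter_upwards [isOpen_Ioo.mem_nhds hs] with y hy
        exact (hgd y hy).deriv
      rw [hev.deriv_eq]
      exact (hVd s hs).deriv
    rw [h2, h3] at h1
    exact h1
  -- integration by parts / FTC
  have huIcc : Set.uIcc (0:ℝ) l = Set.Icc 0 l := Set.uIcc_of_le hl.le
  have hcontF' : ContinuousOn (fun s => V' s * ψ s ^ 2 + V s * (2 * ψ s * Ψ s))
      (Set.Icc (0:ℝ) l) := by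
    exact (hV'c.mul ((hψ.continuousOn).pow 2)).add
      (hVC.continuousOn.mul ((continuousOn_const.mul hψ.continuousOn).mul hΨc))
  have hintF' : IntervalIntegrable (fun s => V' s * ψ s ^ 2 + V s * (2 * ψ s * Ψ s))
      volume 0 l := (huIcc ▸ hcontF').intervalIntegrable
  have hFTC : (∫ s in (0:ℝ)..l, (V' s * ψ s ^ 2 + V s * (2 * ψ s * Ψ s))) = 0 := by
    have h := intervalIntegral.integral_eq_sub_of_hasDerivAt_of_le hl.le
      (f := fun s => V s * ψ s ^ 2)
      (f' := fun s => V' s * ψ s ^ 2 + V s * (2 * ψ s * Ψ s))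
      (hVC.continuousOn.mul ((hψ.continuousOn).pow 2))
      (by
        intro s hs
        have := (hVd s hs).mul ((hψd s hs).pow 2)
        exact this.congr_deriv (by simp only [Pi.pow_apply, Nat.cast_ofNat, Nat.add_one_sub_one, pow_one]))
      hintF'
    rw [h]
    simp [hψl, hψ0]
  -- pointwise inequality on the open interval
  have hpt : ∀ s ∈ Set.Ioo (0:ℝ) l,
      c * ψ s ^ 2 + (V' s * ψ s ^ 2 + V s * (2 * ψ s * Ψ s)) ≤ Ψ s ^ 2 := by
    intro s hs
    nlinarith [hkey s hs, sq_nonneg (V s * ψ s - Ψ s), sq_nonneg (ψ s)]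
  -- integrability of both sides
  have hintL : IntervalIntegrable
      (fun s => c * ψ s ^ 2 + (V' s * ψ s ^ 2 + V s * (2 * ψ s * Ψ s))) volume 0 l := by
    refine (ContinuousOn.intervalIntegrable ?_)
    rw [huIcc]
    exact (continuousOn_const.mul ((hψ.continuousOn).pow 2)).add hcontF'
  have hintR : IntervalIntegrable (fun s => Ψ s ^ 2) volume 0 l := by
    refine (ContinuousOn.intervalIntegrable ?_)
    rw [huIcc]
    exact hΨc.pow 2
  have hintψ2 : IntervalIntegrable (fun s => ψ s ^ 2) volume 0 l := by
    refine (ContinuousOn.intervalIntegrable ?_)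
    rw [huIcc]
    exact (hψ.continuousOn).pow 2
  -- a.e. facts
  have hne0 : ∀ᵐ x : ℝ, x ≠ (0:ℝ) := by
    rw [MeasureTheory.ae_iff]
    simp [Real.volume_singleton]
  have hnel : ∀ᵐ x : ℝ, x ≠ l := by
    rw [MeasureTheory.ae_iff]
    simp [Real.volume_singleton]
  have hmono : (∫ s in (0:ℝ)..l,
      (c * ψ s ^ 2 + (V' s * ψ s ^ 2 + V s * (2 * ψ s * Ψ s))))
      ≤ ∫ s in (0:ℝ)..l, Ψ s ^ 2 := by
    apply intervalIntegral.integral_mono_ae_restrict hl.le hintL hintR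
    have hmem : ∀ᵐ x ∂(volume.restrict (Set.Icc (0:ℝ) l)), x ∈ Set.Icc (0:ℝ) l :=
      ae_restrict_mem measurableSet_Icc
    filter_upwards [hmem, ae_restrict_of_ae hne0, ae_restrict_of_ae hnel]
      with x hx hx0 hxl
    exact hpt x ⟨lt_of_le_of_ne hx.1 (Ne.symm hx0), lt_of_le_of_ne hx.2 hxl⟩
  have hsum : (∫ s in (0:ℝ)..l,
      (c * ψ s ^ 2 + (V' s * ψ s ^ 2 + V s * (2 * ψ s * Ψ s))))
      = c * (∫ s in (0:ℝ)..l, ψ s ^ 2) := by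
    rw [intervalIntegral.integral_add (hintψ2.const_mul c) hintF', hFTC,
      intervalIntegral.integral_const_mul]
    ring
  have hcongr : (∫ s in (0:ℝ)..l, Ψ s ^ 2) = ∫ s in (0:ℝ)..l, (deriv ψ s) ^ 2 := by
    apply intervalIntegral.integral_congr_ae
    filter_upwards [hnel] with x hxl hx
    rw [Set.uIoc_of_le hl.le] at hx
    have hxo : x ∈ Set.Ioo (0:ℝ) l := ⟨hx.1, lt_of_le_of_ne hx.2 hxl⟩
    rw [(hψd x hxo).deriv]
  calc c * (∫ s in (0:ℝ)..l, ψ s ^ 2) = _ := hsum.symm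
    _ ≤ ∫ s in (0:ℝ)..l, Ψ s ^ 2 := hmono
    _ = _ := hcongr
end
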